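/- Let f ∈ k[x_0,...,x_r] be a homogeneous polynomial with nonvanishing Hessian, and let Z(f) denote the closure of the image of the polar map φ_f, with homogeneous coordinate ring k[f_0,...,f_r]. Then dim Z(f) + 1 equals the rank ρ(f) of the Hessian matrix of f computed over the rational function field k(x_0,...,x_r). -/

import Mathlib

/-!
Nonvanishing of the Hessian is the Jacobian criterion for the partials `f_0, …, f_r`: if a
nonzero polynomial of least degree vanished at them, the chain rule and the invertibility of the
Jacobian (here the Hessian) would make all its partial derivatives vanish there too, so in
characteristic zero it would be constant. Hence `k[f_0, …, f_r]` is a polynomial ring in `r + 1`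
variables, of Krull dimension `r + 1`, which is also the rank of the invertible Hessian.
-/

namespace MvPolynomial

theorem pderiv_aeval {R σ τ : Type*} [CommSemiring R] [Fintype τ]
    (g : τ → MvPolynomial σ R) (p : MvPolynomial τ R) (i : σ) :
    pderiv i (aeval g p) = ∑ j, aeval g (pderiv j p) * pderiv i (g j) := by
  classical
  induction p using MvPolynomial.induction_on with
  | C a => simp
  | add p q hp hq => simp only [map_add, hp, hq, add_mul, Finset.sum_add_distrib]
  | mul_X p j hp =>
    simp only [map_mul, map_add, aeval_X, pderiv_mul, hp, pderiv_X, add_mul,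
      Finset.sum_add_distrib, Finset.sum_mul]
    simp only [Pi.single_apply, apply_ite, map_one, map_zero, mul_one, mul_zero, ite_mul,
      zero_mul, Finset.sum_ite_eq, Finset.mem_univ, if_true]
    congr 1
    exact Finset.sum_congr rfl fun _ _ => by ring

theorem totalDegree_pderiv_lt {R σ : Type*} [CommSemiring R] {p : MvPolynomial σ R} {i : σ}
    (h : pderiv i p ≠ 0) : (pderiv i p).totalDegree < p.totalDegree := by
  classical
  obtain ⟨m, hm, hdeg⟩ := Finset.exists_mem_eq_sup _ (support_nonempty.mpr h)
    fun s : σ →₀ ℕ => s.sum fun _ e => e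
  have hmi : m + Finsupp.single i 1 ∈ p.support := by
    rw [mem_support_iff, coeff_pderiv] at hm
    exact mem_support_iff.mpr (left_ne_zero_of_mul hm)
  calc (pderiv i p).totalDegree = m.sum fun _ e => e := hdeg
    _ < (m + Finsupp.single i 1).sum fun _ e => e := by
      rw [Finsupp.sum_add_index' (fun _ => rfl) (fun _ _ _ => rfl)]; simp
    _ ≤ p.totalDegree := le_totalDegree hmi

theorem eq_C_of_forall_pderiv_eq_zero {R σ : Type*} [CommSemiring R] [NoZeroDivisors R]
    [CharZero R] {p : MvPolynomial σ R} (h : ∀ i, pderiv i p = 0) : p = C (coeff 0 p) := by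
  classical
  ext m
  rw [coeff_C]
  split_ifs with hm
  · rw [hm]
  obtain ⟨i, hi⟩ : ∃ i, m i ≠ 0 := by
    by_contra! hzero
    exact hm (Finsupp.ext hzero).symm
  have hsplit : m - Finsupp.single i 1 + Finsupp.single i 1 = m :=
    tsub_add_cancel_of_le (Finsupp.single_le_iff.mpr (Nat.one_le_iff_ne_zero.mpr hi))
  have hcoeff := coeff_pderiv (i := i) p (m - Finsupp.single i 1)
  rw [h i, coeff_zero, hsplit, eq_comm, mul_eq_zero] at hcoeff
  exact hcoeff.resolve_right (Nat.cast_add_one_ne_zero _)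

theorem algebraicIndependent_of_det_jacobian_ne_zero {R σ : Type*} [CommRing R] [IsDomain R]
    [CharZero R] [Fintype σ] [DecidableEq σ] {t : σ → MvPolynomial σ R}
    (hjac : (Matrix.of fun i j => pderiv i (t j)).det ≠ 0) : AlgebraicIndependent R t := by
  rw [algebraicIndependent_iff]
  intro p hp
  induction h : p.totalDegree using Nat.strong_induction_on generalizing p with
  | _ N ih =>
    -- By the chain rule the Jacobian matrix kills the vector `(aeval t (pderiv j p))_j`.
    have hpderiv_aeval : ∀ j, aeval t (pderiv j p) = 0 := by
      refine congrFun (Matrix.eq_zero_of_mulVec_eq_zero hjac ?_)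
      funext i
      simp only [Matrix.mulVec, dotProduct, Matrix.of_apply, Pi.zero_apply]
      rw [← map_zero (pderiv i), ← hp, pderiv_aeval]
      exact Finset.sum_congr rfl fun _ _ => mul_comm _ _
    have hpderiv : ∀ j, pderiv j p = 0 := fun j => by
      by_contra hj
      exact hj (ih _ (h ▸ totalDegree_pderiv_lt hj) _ (hpderiv_aeval j) rfl)
    rw [eq_C_of_forall_pderiv_eq_zero hpderiv] at hp ⊢
    rw [aeval_C, algebraMap_eq, C_eq_zero] at hp
    rw [hp, C_0]

end MvPolynomial

theorem AlgebraicIndependent.ringKrullDim_adjoin_range {K A ι : Type*} [Field K]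
    [CommRing A] [Algebra K A] [Finite ι] {t : ι → A} (ht : AlgebraicIndependent K t) :
    ringKrullDim (Algebra.adjoin K (Set.range t)) = Nat.card ι := by
  rw [← ringKrullDim_eq_of_ringEquiv ht.aevalEquiv.toRingEquiv,
    MvPolynomial.ringKrullDim_of_isNoetherianRing, ringKrullDim_eq_zero_of_field, zero_add]

theorem Matrix.rank_map_eq_card_of_det_ne_zero {R K n : Type*} [CommRing R] [Field K]
    [Fintype n] [DecidableEq n] {A : Matrix n n R} (hA : A.det ≠ 0) {φ : R →+* K}
    (hφ : Function.Injective φ) : (A.map φ).rank = Fintype.card n := by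
  refine Matrix.rank_of_isUnit _ ((Matrix.isUnit_iff_isUnit_det _).mpr ?_)
  rw [← RingHom.mapMatrix_apply, ← RingHom.map_det]
  exact isUnit_iff_ne_zero.mpr ((map_ne_zero_iff φ hφ).mpr hA)

open MvPolynomial

theorem dim_polar_image_eq_hessian_rank_general {k : Type*} [Field k] [CharZero k]
    {r : ℕ} (f : MvPolynomial (Fin (r + 1)) k)
    (hhess : (Matrix.of fun i j : Fin (r + 1) =>
        MvPolynomial.pderiv i (MvPolynomial.pderiv j f)).det ≠ 0) :
    ringKrullDim
        (Algebra.adjoin k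
          (Set.range (fun i : Fin (r + 1) => MvPolynomial.pderiv i f)))
      = ((Matrix.of fun i j : Fin (r + 1) =>
            algebraMap (MvPolynomial (Fin (r + 1)) k)
              (FractionRing (MvPolynomial (Fin (r + 1)) k))
              (MvPolynomial.pderiv i (MvPolynomial.pderiv j f))).rank : WithBot (WithTop ℕ)) := by
  have hrank : (Matrix.of fun i j : Fin (r + 1) =>
      algebraMap (MvPolynomial (Fin (r + 1)) k) (FractionRing (MvPolynomial (Fin (r + 1)) k))
        (pderiv i (pderiv j f))).rank = r + 1 :=
    (Matrix.rank_map_eq_card_of_det_ne_zero hhess (IsFractionRing.injective _ _)).trans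
      (Fintype.card_fin _)
  rw [(algebraicIndependent_of_det_jacobian_ne_zero hhess).ringKrullDim_adjoin_range, hrank,
    Nat.card_fin]
  rfl

/-- The dimension of the polar image `Z(f)` plus one (i.e. the Krull dimension of
the affine cone `k[f_0,…,f_r]`, the coordinate ring of the closure of the image of
the polar map) equals the rank `ρ(f)` of the Hessian matrix of `f` computed over the
rational function field `k(x_0,…,x_r)`. -/
theorem dim_polar_image_eq_hessian_rank {k : Type*} [Field k] [CharZero k]
    {r d : ℕ} (f : MvPolynomial (Fin (r + 1)) k) (hf : f.IsHomogeneous d)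
    (hhess : (Matrix.of fun i j : Fin (r + 1) =>
        MvPolynomial.pderiv i (MvPolynomial.pderiv j f)).det ≠ 0) :
    ringKrullDim
        (Algebra.adjoin k
          (Set.range (fun i : Fin (r + 1) => MvPolynomial.pderiv i f)))
      = ((Matrix.of fun i j : Fin (r + 1) =>
            algebraMap (MvPolynomial (Fin (r + 1)) k)
              (FractionRing (MvPolynomial (Fin (r + 1)) k))
              (MvPolynomial.pderiv i (MvPolynomial.pderiv j f))).rank : WithBot (WithTop ℕ)) :=
  dim_polar_image_eq_hessian_rank_general f hhess
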